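/- arXiv:2506.10872 — 3 statements merged into one kernel-verified Lean document; each statement's English description precedes it below -/
import Mathlib

section
/- Let v₁ and v₂ be independent random variables, where v₁ takes the value 14 with probability 1/2 and 0 with probability 1/2, and v₂ takes the value 18 with probability 1/5 and 0 with probability 4/5. Then E[1(v₁ = 14)·14 + 1(v₁ = 0)·(max(v₂, 10) − 1)] − 1 = 113/10 and E[1(v₂ = 18)·18 + 1(v₂ = 0)·(max(v₁, 10) − 1)] − 1 = 114/10; in particular the second quantity strictly exceeds the first. These are the expected values, in the three-box Pandora's box instance with both opening costs equal to 1 and an already-open box of value 10, of the policy P1 that first opens box 1 and opens box 2 only if the revealed reward is 0, and of the policy P2 that first opens box 2 and opens box 1 only if the revealed reward is 0; hence the one-step-lookahead policy P1 is strictly outperformed by P2. -/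
/-!
Both rewards take two values almost surely, so by independence each policy value is a four-term
sum over the product of the two laws:
P1 = ½·14 + ½·(⅕·17 + ⅘·9) − 1 = 113/10 and P2 = ⅕·18 + ⅘·(½·13 + ½·9) − 1 = 114/10.
-/

open MeasureTheory ProbabilityTheory

section FiniteLaw

variable {Ω α β E : Type*} {mΩ : MeasurableSpace Ω} {mα : MeasurableSpace α}
  {mβ : MeasurableSpace β} [MeasurableSingletonClass α] [MeasurableSingletonClass β]
  [NormedAddCommGroup E] [NormedSpace ℝ E] [CompleteSpace E] {μ : Measure Ω}

lemma ae_mem_finset_of_sum_measure_preimage_eq_one [IsProbabilityMeasure μ] {f : Ω → α}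
    (hf : Measurable f) {s : Finset α} (hs : ∑ a ∈ s, μ (f ⁻¹' {a}) = 1) :
    ∀ᵐ ω ∂μ, f ω ∈ s := by
  have hmeas : MeasurableSet (f ⁻¹' s) := hf s.measurableSet
  rw [sum_measure_preimage_singleton s fun a _ ↦ hf (measurableSet_singleton a),
    ← prob_compl_eq_zero_iff hmeas] at hs
  exact measure_eq_zero_iff_ae_notMem.1 hs |>.mono fun _ h ↦ not_not.1 h

lemma integral_comp_eq_sum_of_ae_mem_finset [IsFiniteMeasure μ] {f : Ω → α}
    (hf : Measurable f) {s : Finset α} (hs : ∀ᵐ ω ∂μ, f ω ∈ s) (φ : α → E) :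
    ∫ ω, φ (f ω) ∂μ = ∑ a ∈ s, μ.real (f ⁻¹' {a}) • φ a := by
  have hlaw := (Measure.ae_mem_finset_iff_map_eq_sum_dirac hf.aemeasurable).1 hs
  have hint : ∀ a ∈ s, Integrable φ (μ (f ⁻¹' {a}) • Measure.dirac a) :=
    fun a _ ↦ (integrable_dirac enorm_lt_top).smul_measure (measure_ne_top _ _)
  have hφ : AEStronglyMeasurable φ (μ.map f) :=
    hlaw ▸ (integrable_finsetSum_measure.2 hint).aestronglyMeasurable
  rw [← integral_map hf.aemeasurable hφ, hlaw, integral_finsetSum_measure hint]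
  simp only [integral_smul_measure, integral_dirac, measureReal_def]

lemma ProbabilityTheory.IndepFun.integral_comp₂_eq_sum [IsFiniteMeasure μ]
    {f : Ω → α} {g : Ω → β} (hf : Measurable f) (hg : Measurable g) (hfg : f ⟂ᵢ[μ] g)
    {s : Finset α} {t : Finset β}
    (hs : ∀ᵐ ω ∂μ, f ω ∈ s) (ht : ∀ᵐ ω ∂μ, g ω ∈ t) (φ : α → β → E) :
    ∫ ω, φ (f ω) (g ω) ∂μ =
      ∑ a ∈ s, ∑ b ∈ t, (μ.real (f ⁻¹' {a}) * μ.real (g ⁻¹' {b})) • φ a b := by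
  have hst : ∀ᵐ ω ∂μ, (f ω, g ω) ∈ s ×ˢ t := by
    filter_upwards [hs, ht] with ω hfω hgω using Finset.mem_product.2 ⟨hfω, hgω⟩
  have hjoint := integral_comp_eq_sum_of_ae_mem_finset (hf.prodMk hg) hst (Function.uncurry φ)
  refine hjoint.trans ?_
  rw [Finset.sum_product]
  refine Finset.sum_congr rfl fun a _ ↦ Finset.sum_congr rfl fun b _ ↦ ?_
  have hfib := hfg.measure_inter_preimage_eq_mul {a} {b} (measurableSet_singleton a)
    (measurableSet_singleton b)
  rw [← Set.singleton_prod_singleton, Set.mk_preimage_prod, measureReal_def, hfib,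
    ENNReal.toReal_mul, measureReal_def, measureReal_def, Function.uncurry_apply_pair]

end FiniteLaw

theorem stmt5 {Ω : Type*} [MeasurableSpace Ω] (μ : Measure Ω) [IsProbabilityMeasure μ]
    (v₁ v₂ : Ω → ℝ) (h₁ : Measurable v₁) (h₂ : Measurable v₂)
    (hind : ProbabilityTheory.IndepFun v₁ v₂ μ)
    (hv₁a : μ {ω | v₁ ω = 14} = 1/2) (hv₁b : μ {ω | v₁ ω = 0} = 1/2)
    (hv₂a : μ {ω | v₂ ω = 18} = 1/5) (hv₂b : μ {ω | v₂ ω = 0} = 4/5) :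
    ((∫ ω, ((if v₁ ω = 14 then (14 : ℝ) else 0)
        + (if v₁ ω = 0 then max (v₂ ω) 10 - 1 else 0)) ∂μ) - 1 = 113/10) ∧
    ((∫ ω, ((if v₂ ω = 18 then (18 : ℝ) else 0)
        + (if v₂ ω = 0 then max (v₁ ω) 10 - 1 else 0)) ∂μ) - 1 = 114/10) ∧
    ((113 : ℝ)/10 < 114/10) := by
  have hv₁ : ∀ᵐ ω ∂μ, v₁ ω ∈ ({14, 0} : Finset ℝ) :=
    ae_mem_finset_of_sum_measure_preimage_eq_one h₁ <| by
      rw [Finset.sum_pair (by norm_num)]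
      change μ {ω | v₁ ω = 14} + μ {ω | v₁ ω = 0} = 1
      rw [hv₁a, hv₁b, ENNReal.add_halves]
  have hv₂ : ∀ᵐ ω ∂μ, v₂ ω ∈ ({18, 0} : Finset ℝ) :=
    ae_mem_finset_of_sum_measure_preimage_eq_one h₂ <| by
      rw [Finset.sum_pair (by norm_num)]
      change μ {ω | v₂ ω = 18} + μ {ω | v₂ ω = 0} = 1
      rw [hv₂a, hv₂b, ENNReal.div_add_div_same]
      norm_num [ENNReal.div_self]
  have hP₁ := hind.integral_comp₂_eq_sum h₁ h₂ hv₁ hv₂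
    fun x y ↦ (if x = 14 then (14 : ℝ) else 0) + (if x = 0 then max y 10 - 1 else 0)
  have hP₂ := hind.symm.integral_comp₂_eq_sum h₂ h₁ hv₂ hv₁
    fun y x ↦ (if y = 18 then (18 : ℝ) else 0) + (if y = 0 then max x 10 - 1 else 0)
  simp only [Finset.sum_pair (show (14 : ℝ) ≠ 0 by norm_num),
    Finset.sum_pair (show (18 : ℝ) ≠ 0 by norm_num), measureReal_def, Set.preimage,
    Set.mem_singleton_iff, hv₁a, hv₁b, hv₂a, hv₂b] at hP₁ hP₂
  exact ⟨by rw [hP₁]; norm_num, by rw [hP₂]; norm_num, by norm_num⟩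
end

section
/- Let μ, α ∈ ℝ and σ > 0, and let X be a Gaussian random variable with mean μ and variance σ². Then E[max(X − α, 0)] = (μ − α)·Φ((μ − α)/σ) + σ·φ((μ − α)/σ), where φ and Φ denote the standard normal probability density function and cumulative distribution function, respectively. -/
open MeasureTheory

/-- The standard normal probability density function `φ`. -/
noncomputable def stdGaussianPDF (z : ℝ) : ℝ :=
  (Real.sqrt (2 * Real.pi))⁻¹ * Real.exp (-(z ^ 2) / 2)

/-- The standard normal cumulative distribution function `Φ`. -/
noncomputable def stdGaussianCDF (z : ℝ) : ℝ :=
  ∫ u in Set.Iic z, stdGaussianPDF u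

/-!
Write `X = m + σ Z` with `Z` standard normal, so that `max (X - α) 0 = σ · max (Z + c) 0` with
`c = (m - α) / σ`. On `{z > -c}` the integrand `(z + c) φ z` splits into `z φ z = -φ' z`, which
integrates to `φ (-c) = φ c`, and `c φ z`, which integrates to `c Φ c` by the symmetry of `φ`.
-/

open Real Set Filter ProbabilityTheory
open scoped Topology

lemma stdGaussianPDF_eq_gaussianPDFReal : stdGaussianPDF = gaussianPDFReal 0 1 := by
  funext z
  simp [stdGaussianPDF, gaussianPDFReal]

lemma stdGaussianPDF_neg (z : ℝ) : stdGaussianPDF (-z) = stdGaussianPDF z := by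
  simp [stdGaussianPDF]

lemma integrable_stdGaussianPDF : Integrable stdGaussianPDF :=
  stdGaussianPDF_eq_gaussianPDFReal ▸ integrable_gaussianPDFReal 0 1

lemma integrable_mul_stdGaussianPDF : Integrable fun z ↦ z * stdGaussianPDF z := by
  refine ((integrable_mul_exp_neg_mul_sq (by norm_num : (0 : ℝ) < 1 / 2)).const_mul
    (√(2 * π))⁻¹).congr (.of_forall fun z ↦ ?_)
  simp only [stdGaussianPDF]
  ring_nf

lemma hasDerivAt_stdGaussianPDF (z : ℝ) :
    HasDerivAt stdGaussianPDF (-(z * stdGaussianPDF z)) z := by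
  have h_exponent : HasDerivAt (fun x : ℝ ↦ -(x ^ 2) / 2) (-z) z :=
    ((hasDerivAt_pow 2 z).neg.div_const 2).congr_deriv (by norm_num; ring)
  exact (h_exponent.exp.const_mul (√(2 * π))⁻¹).congr_deriv (by simp only [stdGaussianPDF]; ring)

lemma tendsto_stdGaussianPDF_atTop : Tendsto stdGaussianPDF atTop (𝓝 0) := by
  have h : Tendsto (fun z : ℝ ↦ -(z ^ 2) / 2) atTop atBot :=
    (tendsto_neg_atTop_atBot.comp (tendsto_pow_atTop two_ne_zero)).atBot_div_const two_pos
  have h_pdf := (tendsto_exp_atBot.comp h).const_mul (√(2 * π))⁻¹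
  rw [mul_zero] at h_pdf
  exact h_pdf

lemma integral_Ioi_mul_stdGaussianPDF (a : ℝ) :
    ∫ z in Ioi a, z * stdGaussianPDF z = stdGaussianPDF a := by
  have h := integral_Ioi_of_hasDerivAt_of_tendsto' (a := a) (f := -stdGaussianPDF)
    (fun z _ ↦ by simpa only [neg_neg] using (hasDerivAt_stdGaussianPDF z).neg)
    integrable_mul_stdGaussianPDF.integrableOn tendsto_stdGaussianPDF_atTop.neg
  simpa only [Pi.neg_apply, neg_zero, zero_sub, neg_neg] using h

lemma integral_Ioi_stdGaussianPDF (a : ℝ) :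
    ∫ z in Ioi a, stdGaussianPDF z = stdGaussianCDF (-a) := by
  rw [← neg_neg a, ← integral_comp_neg_Iic, neg_neg]
  simp only [stdGaussianPDF_neg, stdGaussianCDF]

lemma integral_max_add_mul_stdGaussianPDF (c : ℝ) :
    ∫ z, max (z + c) 0 * stdGaussianPDF z = c * stdGaussianCDF c + stdGaussianPDF c := by
  have h_indicator : (fun z ↦ max (z + c) 0 * stdGaussianPDF z)
      = (Ioi (-c)).indicator fun z ↦ z * stdGaussianPDF z + c * stdGaussianPDF z := by
    funext z
    by_cases hz : -c < z
    · rw [indicator_of_mem (mem_Ioi.mpr hz), max_eq_left (by linarith)]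
      ring
    · rw [indicator_of_notMem (mt mem_Ioi.mp hz), max_eq_right (by linarith), zero_mul]
  rw [h_indicator, integral_indicator measurableSet_Ioi,
    integral_add integrable_mul_stdGaussianPDF.integrableOn
      (integrable_stdGaussianPDF.const_mul c).integrableOn,
    integral_Ioi_mul_stdGaussianPDF, integral_const_mul, integral_Ioi_stdGaussianPDF,
    neg_neg, stdGaussianPDF_neg]
  ring

lemma integral_gaussianReal_zero_one_eq_integral_mul (f : ℝ → ℝ) :
    ∫ z, f z ∂gaussianReal 0 1 = ∫ z, stdGaussianPDF z * f z := by
  rw [integral_gaussianReal_eq_integral_smul one_ne_zero, stdGaussianPDF_eq_gaussianPDFReal]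
  rfl

lemma gaussianReal_eq_map_mul_add (m σ : ℝ) :
    gaussianReal m (σ ^ 2).toNNReal = (gaussianReal 0 1).map fun z ↦ σ * z + m := by
  change _ = ((gaussianReal 0 1).map ((· + m) ∘ (σ * ·)))
  rw [← Measure.map_map (measurable_add_const m) (measurable_const_mul σ),
    gaussianReal_map_const_mul, gaussianReal_map_add_const, mul_zero, zero_add, mul_one]
  congr
  ext
  simp [sq_nonneg]

theorem stmt6_general {Ω : Type*} [MeasurableSpace Ω] (P : Measure Ω)
    (X : Ω → ℝ) (hX : Measurable X) (m α σ : ℝ) (hσ : 0 < σ)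
    (hlaw : P.map X = ProbabilityTheory.gaussianReal m (Real.toNNReal (σ ^ 2))) :
    ∫ ω, max (X ω - α) 0 ∂P
      = (m - α) * stdGaussianCDF ((m - α) / σ) + σ * stdGaussianPDF ((m - α) / σ) := by
  set c := (m - α) / σ
  have hσc : σ * c = m - α := mul_div_cancel₀ _ hσ.ne'
  have hf : Continuous fun x : ℝ ↦ max (x - α) 0 := by fun_prop
  calc ∫ ω, max (X ω - α) 0 ∂P
      = ∫ x, max (x - α) 0 ∂(gaussianReal 0 1).map fun z ↦ σ * z + m := by
        rw [← gaussianReal_eq_map_mul_add, ← hlaw,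
          integral_map hX.aemeasurable hf.aestronglyMeasurable]
    _ = ∫ z, σ * (max (z + c) 0 * stdGaussianPDF z) := by
        rw [integral_map (by fun_prop) hf.aestronglyMeasurable, integral_gaussianReal_zero_one_eq_integral_mul]
        congr with z
        have h_scale : max (σ * (z + c)) 0 = σ * max (z + c) 0 := by
          rw [mul_max_of_nonneg _ _ hσ.le, mul_zero]
        rw [show σ * z + m - α = σ * (z + c) by rw [mul_add, hσc]; ring, h_scale]
        ring
    _ = (m - α) * stdGaussianCDF c + σ * stdGaussianPDF c := by
        rw [integral_const_mul, integral_max_add_mul_stdGaussianPDF, mul_add, ← mul_assoc, hσc]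

theorem stmt6 {Ω : Type*} [MeasurableSpace Ω] (P : Measure Ω) [IsProbabilityMeasure P]
    (X : Ω → ℝ) (hX : Measurable X) (m α σ : ℝ) (hσ : 0 < σ)
    (hlaw : P.map X = ProbabilityTheory.gaussianReal m (Real.toNNReal (σ ^ 2))) :
    ∫ ω, max (X ω - α) 0 ∂P
      = (m - α) * stdGaussianCDF ((m - α) / σ) + σ * stdGaussianPDF ((m - α) / σ) :=
  stmt6_general P X hX m α σ hσ hlaw
end

section
/- For every state s of a Markov chain with rewards satisfying the finite-termination and integrability assumption, the map α ↦ V*(s; α) is convex and nondecreasing on ℝ; it satisfies 0 ≤ V*(s; β) − V*(s; α) ≤ β − α whenever α ≤ β, so its one-sided derivatives exist everywhere and take values in [0,1]; and it satisfies V*(s; α) ≥ α for all α ∈ ℝ. -/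
open MeasureTheory
open scoped Classical ENNReal

noncomputable section

/-- The hitting time of the set `A` along the path `ω`, valued in `ℕ∞`. -/
def hitTime {S : Type*} (A : Set S) (ω : ℕ → S) : ℕ∞ :=
  ⨅ t : {t : ℕ // ω t ∈ A}, (t.1 : ℕ∞)

/-- A Markov chain with rewards (Definition 2.1 of the paper), bundled with its canonical
trajectory measures, in the undiscounted setting, satisfying the finite-termination and
integrability assumption: a measurable set `term` of terminal states, a Markov transition
kernel `p` for which terminal states are absorbing, a measurable reward function `r`
vanishing on terminal states, and for each starting state `s` the law `traj s` of the
canonical trajectory `(X_t)` with `X_0 = s` and `X_{t+1} ~ p (X_t)` (characterized by the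
one-step Markov property `traj_markov`); from every starting state the terminal set is hit
in finite time almost surely, and the pre-termination rewards are absolutely integrable. -/
structure MC (S : Type*) [MeasurableSpace S] where
  term : Set S
  term_meas : MeasurableSet term
  p : S → Measure S
  p_meas : Measurable p
  p_prob : ∀ s, IsProbabilityMeasure (p s)
  r : S → ℝ
  r_meas : Measurable r
  r_term : ∀ s ∈ term, r s = 0
  absorbing : ∀ s ∈ term, p s = Measure.dirac s
  traj : S → Measure (ℕ → S)
  traj_meas : Measurable traj
  traj_prob : ∀ s, IsProbabilityMeasure (traj s)
  traj_zero : ∀ s, ∀ᵐ ω ∂ traj s, ω 0 = s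
  traj_markov : ∀ s, (traj s).map (fun ω n => ω (n + 1)) = (p s).bind traj
  hit_fin : ∀ s, ∀ᵐ ω ∂ traj s, hitTime term ω < ⊤
  rwd_int : ∀ s, (∫⁻ ω, ∑' t : ℕ,
    (if (t : ℕ∞) < hitTime term ω then ENNReal.ofReal |r (ω t)| else 0) ∂ traj s) < ⊤

namespace MC

variable {S : Type*} [MeasurableSpace S]

/-- The σ-algebra of events on path space observable by time `n`
(the natural filtration of the coordinate process). -/
def cyl (S : Type*) [MeasurableSpace S] (n : ℕ) : MeasurableSpace (ℕ → S) :=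
  MeasurableSpace.comap (fun (ω : ℕ → S) (i : Fin (n + 1)) => ω i) inferInstance

/-- `τ` is a stopping time of the natural filtration of the coordinate process. -/
def IsStopping (S : Type*) [MeasurableSpace S] (τ : (ℕ → S) → ℕ∞) : Prop :=
  ∀ n : ℕ, MeasurableSet[cyl S n] {ω | τ ω ≤ (n : ℕ∞)}

/-- The payoff, in the `α`-local MDP, of the stopping time `τ` along the path `ω`:
the rewards collected before stopping, plus `α` if `τ` ever stops. -/
def payoff (M : MC S) (α : ℝ) (τ : (ℕ → S) → ℕ∞) (ω : ℕ → S) : ℝ :=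
  (∑' t : ℕ, if (t : ℕ∞) < τ ω then M.r (ω t) else 0)
    + α * (if τ ω < ⊤ then 1 else 0)

/-- The local-MDP value function `V*(s; α)`: the supremum, over stopping times `τ` of the
natural filtration, of the expected payoff. -/
def val (M : MC S) (s : S) (α : ℝ) : ℝ :=
  ⨆ τ : {τ : (ℕ → S) → ℕ∞ // IsStopping S τ}, ∫ ω, M.payoff α τ.1 ω ∂ M.traj s

/-- The Gittins index `G(s) = inf {α | V*(s; α) = α}`, real-valued
(with the junk value `sInf ∅ = 0` in case the defining set is empty). -/
def gittins (M : MC S) (s : S) : ℝ := sInf {α : ℝ | M.val s α = α}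

/-- The Gittins index valued in `ℝ ∪ {±∞}`, with `sInf ∅ = ⊤` representing `G(s) = ∞`. -/
def gittinsE (M : MC S) (s : S) : EReal :=
  sInf ((fun α : ℝ => (α : EReal)) '' {α : ℝ | M.val s α = α})

/-- A non-terminal state is free if it has nonnegative reward and cannot transition
directly into the terminal set. -/
def Free (M : MC S) (s : S) : Prop :=
  s ∉ M.term ∧ 0 ≤ M.r s ∧ M.p s M.term = 0

/-- The Markov chain has no free states. -/
def NoFreeStates (M : MC S) : Prop := ∀ s : S, ¬ M.Free s

/-- The surrogate value along a path `ω`: the minimum Gittins index over the states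
strictly before the hitting time of the terminal set. -/
def surrogate (M : MC S) (ω : ℕ → S) : ℝ :=
  ⨅ t : {t : ℕ // (t : ℕ∞) < hitTime M.term ω}, M.gittins (ω t.1)

end MC

end

/-!
`V*(s; ·)` is the supremum, over stopping times `τ`, of the affine functions
`α ↦ E[rewards before τ] + α · P(τ < ∞)`. Their slopes lie in `[0, 1]`, and since terminal
states are absorbing and carry no reward, their intercepts are bounded by the expected total
absolute reward. A supremum of such a family is convex, nondecreasing and `1`-Lipschitz, so its
one-sided derivatives exist and lie in `[0, 1]`; stopping at once gives `V*(s; α) ≥ α`.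
-/

open Filter Set Topology

section SupOfAffine

theorem convexOn_ciSup {E ι : Type*} [AddCommMonoid E] [Module ℝ E] [Nonempty ι] {s : Set E}
    {f : ι → E → ℝ} (hf : ∀ i, ConvexOn ℝ s (f i))
    (hbdd : ∀ x ∈ s, BddAbove (range fun i => f i x)) :
    ConvexOn ℝ s fun x => ⨆ i, f i x := by
  refine ⟨(hf (Classical.arbitrary ι)).1, fun x hx y hy p q hp hq hpq => ciSup_le fun i => ?_⟩
  exact ((hf i).2 hx hy hp hq hpq).trans (add_le_add
    (smul_le_smul_of_nonneg_left (le_ciSup (hbdd x hx) i) hp)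
    (smul_le_smul_of_nonneg_left (le_ciSup (hbdd y hy) i) hq))

variable {ι : Type*} {a b : ι → ℝ}

theorem bddAbove_range_affine {C : ℝ} (ha : ∀ i, a i ≤ C) (hb : ∀ i, b i ∈ Icc (0 : ℝ) 1)
    (α : ℝ) : BddAbove (range fun i => a i + α * b i) := by
  refine ⟨C + |α|, forall_mem_range.2 fun i => ?_⟩
  have hαb : α * b i ≤ |α| := calc
    α * b i ≤ |α| * b i := mul_le_mul_of_nonneg_right (le_abs_self α) (hb i).1
    _ ≤ |α| := mul_le_of_le_one_right (abs_nonneg α) (hb i).2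
  exact add_le_add (ha i) hαb

theorem convexOn_iSup_affine [Nonempty ι] (hbdd : ∀ α, BddAbove (range fun i => a i + α * b i)) :
    ConvexOn ℝ univ fun α => ⨆ i, a i + α * b i := by
  refine convexOn_ciSup (fun i => ⟨convex_univ, fun x _ y _ p q _ _ hpq => le_of_eq ?_⟩)
    fun α _ => hbdd α
  simp only [smul_eq_mul]
  linear_combination (-a i) * hpq

theorem monotone_iSup_affine (hb : ∀ i, 0 ≤ b i)
    (hbdd : ∀ α, BddAbove (range fun i => a i + α * b i)) :
    Monotone fun α => ⨆ i, a i + α * b i := fun _ β hαβ =>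
  ciSup_mono (hbdd β) fun i => add_le_add le_rfl (mul_le_mul_of_nonneg_right hαβ (hb i))

theorem monotone_sub_iSup_affine [Nonempty ι] (hb : ∀ i, b i ≤ 1)
    (hbdd : ∀ α, BddAbove (range fun i => a i + α * b i)) :
    Monotone fun α => α - ⨆ i, a i + α * b i := by
  intro α β hαβ
  suffices (⨆ i, a i + β * b i) ≤ (⨆ i, a i + α * b i) + (β - α) by linarith
  refine ciSup_le fun i => ?_
  have hslope : (β - α) * b i ≤ β - α := mul_le_of_le_one_right (sub_nonneg.2 hαβ) (hb i)
  linarith [le_ciSup (hbdd α) i]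

end SupOfAffine

section OneSidedDeriv

variable {f : ℝ → ℝ}

theorem HasDerivWithinAt.mem_Icc_of_monotone_of_monotone_sub {d x : ℝ} {s : Set ℝ}
    (hd : HasDerivWithinAt f d s x) (hx : AccPt x (𝓟 s)) (hf : Monotone f)
    (hf' : Monotone fun y => y - f y) : d ∈ Icc (0 : ℝ) 1 :=
  ⟨hd.nonneg_of_monotoneOn hx (hf.monotoneOn s),
    sub_nonneg.1 (((hasDerivWithinAt_id x s).sub hd).nonneg_of_monotoneOn hx (hf'.monotoneOn s))⟩

theorem ConvexOn.exists_hasDerivWithinAt_Ici_mem_Icc (hconv : ConvexOn ℝ univ f)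
    (hf : Monotone f) (hf' : Monotone fun y => y - f y) (x : ℝ) :
    ∃ d ∈ Icc (0 : ℝ) 1, HasDerivWithinAt f d (Ici x) x := by
  have hd := hconv.hasDerivWithinAt_rightDeriv_of_mem_interior (by simp : x ∈ interior univ)
  have hx : AccPt x (𝓟 (Ioi x)) := by
    rw [accPt_principal_iff_nhdsWithin]; simpa using nhdsGT_neBot x
  exact ⟨_, hd.mem_Icc_of_monotone_of_monotone_sub hx hf hf', hd.Ici_of_Ioi⟩

theorem ConvexOn.exists_hasDerivWithinAt_Iic_mem_Icc (hconv : ConvexOn ℝ univ f)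
    (hf : Monotone f) (hf' : Monotone fun y => y - f y) (x : ℝ) :
    ∃ d ∈ Icc (0 : ℝ) 1, HasDerivWithinAt f d (Iic x) x := by
  have hd := hconv.hasDerivWithinAt_leftDeriv_of_mem_interior (by simp : x ∈ interior univ)
  have hx : AccPt x (𝓟 (Iio x)) := by
    rw [accPt_principal_iff_nhdsWithin]; simpa using nhdsLT_neBot x
  exact ⟨_, hd.mem_Icc_of_monotone_of_monotone_sub hx hf hf', hd.Iic_of_Iio⟩

end OneSidedDeriv

theorem hitTime_le_coe_iff {S : Type*} (A : Set S) (ω : ℕ → S) (n : ℕ) :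
    hitTime A ω ≤ n ↔ ∃ k ≤ n, ω k ∈ A := by
  rw [← ENat.lt_add_one_iff (ENat.natCast_ne_top n), hitTime, iInf_lt_iff]
  constructor
  · rintro ⟨⟨k, hk⟩, hkn⟩
    exact ⟨k, Order.lt_add_one_iff.1 (by exact_mod_cast hkn), hk⟩
  · rintro ⟨k, hkn, hk⟩
    exact ⟨⟨k, hk⟩, by exact_mod_cast Nat.lt_succ_of_le hkn⟩

theorem measurableSet_lt_hitTime {S : Type*} [MeasurableSpace S] {A : Set S}
    (hA : MeasurableSet A) (t : ℕ) : MeasurableSet {ω : ℕ → S | (t : ℕ∞) < hitTime A ω} := by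
  have : {ω : ℕ → S | (t : ℕ∞) < hitTime A ω} = ⋂ k ≤ t, {ω | ω k ∈ A}ᶜ := by
    ext ω
    rw [mem_ofPred_eq, lt_iff_not_ge, hitTime_le_coe_iff]
    simp
  rw [this]
  exact .iInter fun k => .iInter fun _ => (measurable_pi_apply k hA).compl

namespace MC

variable {S : Type*} [MeasurableSpace S]

theorem cyl_le (n : ℕ) : cyl S n ≤ (inferInstance : MeasurableSpace (ℕ → S)) :=
  (measurable_pi_lambda (fun (ω : ℕ → S) (i : Fin (n + 1)) => ω i)
    fun i => measurable_pi_apply (i : ℕ)).comap_le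

theorem isStopping_zero : IsStopping S fun _ => 0 := fun n => by simp

namespace IsStopping

variable {τ : (ℕ → S) → ℕ∞}

theorem measurableSet_le (hτ : IsStopping S τ) (n : ℕ) : MeasurableSet {ω | τ ω ≤ n} :=
  cyl_le n _ (hτ n)

theorem measurableSet_lt (hτ : IsStopping S τ) (n : ℕ) :
    MeasurableSet {ω | (n : ℕ∞) < τ ω} := by
  simp_rw [lt_iff_not_ge]; exact (hτ.measurableSet_le n).compl

theorem measurableSet_lt_top (hτ : IsStopping S τ) : MeasurableSet {ω | τ ω < ⊤} := by
  have : {ω | τ ω < ⊤} = ⋃ n : ℕ, {ω | τ ω ≤ n} := by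
    ext ω
    simp only [mem_ofPred_eq, mem_iUnion]
    refine ⟨fun h => ?_, fun ⟨n, hn⟩ => hn.trans_lt (ENat.natCast_lt_top n)⟩
    obtain ⟨n, hn⟩ := ENat.ne_top_iff_exists.1 h.ne
    exact ⟨n, hn.ge⟩
  rw [this]; exact .iUnion hτ.measurableSet_le

end IsStopping

variable (M : MC S)

noncomputable def rewardBefore (τ : (ℕ → S) → ℕ∞) (ω : ℕ → S) : ℝ :=
  ∑' t : ℕ, if (t : ℕ∞) < τ ω then M.r (ω t) else 0

noncomputable def totalAbsReward (ω : ℕ → S) : ℝ≥0∞ :=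
  ∑' t : ℕ, if (t : ℕ∞) < hitTime M.term ω then ENNReal.ofReal |M.r (ω t)| else 0

theorem traj_shift_preimage (s : S) {E : Set (ℕ → S)} (hE : MeasurableSet E) :
    M.traj s ((fun ω k => ω (k + 1)) ⁻¹' E) = ∫⁻ x, M.traj x E ∂M.p s := by
  rw [← Measure.map_apply (measurable_pi_lambda _ fun k => measurable_pi_apply (k + 1)) hE,
    M.traj_markov, Measure.bind_apply hE M.traj_meas.aemeasurable]

theorem traj_eval_zero_mem_eq_zero {x : S} {A : Set S} (hx : x ∉ A) :
    M.traj x {ω | ω 0 ∈ A} = 0 :=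
  measure_mono_null (fun ω (hω : ω 0 ∈ A) (h0 : ω 0 = x) => hx (h0 ▸ hω))
    (ae_iff.1 (M.traj_zero x))

theorem traj_leave_term_eq_zero (x : S) (n : ℕ) :
    M.traj x {ω | ω n ∈ M.term ∧ ω (n + 1) ∉ M.term} = 0 := by
  induction n generalizing x with
  | zero =>
    by_cases hx : x ∈ M.term
    · refine measure_mono_null (fun ω hω => hω.2) ?_
      change M.traj x ((fun ω k => ω (k + 1)) ⁻¹' {ω | ω 0 ∈ M.termᶜ}) = 0
      have hE : MeasurableSet {ω : ℕ → S | ω 0 ∈ M.termᶜ} :=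
        measurable_pi_apply 0 M.term_meas.compl
      have hmeas : Measurable fun y => M.traj y {ω : ℕ → S | ω 0 ∈ M.termᶜ} :=
        (Measure.measurable_coe hE).comp M.traj_meas
      rw [M.traj_shift_preimage x hE, M.absorbing x hx, lintegral_dirac' x hmeas]
      exact M.traj_eval_zero_mem_eq_zero (not_not.2 hx)
    · exact measure_mono_null (fun ω hω => hω.1) (M.traj_eval_zero_mem_eq_zero hx)
  | succ n ih =>
    have hE : MeasurableSet {ω : ℕ → S | ω n ∈ M.term ∧ ω (n + 1) ∉ M.term} :=
      (measurable_pi_apply n M.term_meas).inter (measurable_pi_apply (n + 1) M.term_meas).compl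
    change M.traj x ((fun ω k => ω (k + 1)) ⁻¹' {ω | ω n ∈ M.term ∧ ω (n + 1) ∉ M.term}) = 0
    rw [M.traj_shift_preimage x hE]
    simp [ih]

theorem ae_mem_term_of_hitTime_le (s : S) :
    ∀ᵐ ω ∂M.traj s, ∀ t : ℕ, hitTime M.term ω ≤ t → ω t ∈ M.term := by
  have habs : ∀ᵐ ω ∂M.traj s, ∀ n, ω n ∈ M.term → ω (n + 1) ∈ M.term :=
    ae_all_iff.2 fun n => ae_iff.2 <|
      measure_mono_null (fun _ => Classical.not_imp.1) (M.traj_leave_term_eq_zero s n)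
  filter_upwards [habs] with ω hω t ht
  obtain ⟨k, hkt, hk⟩ := (hitTime_le_coe_iff _ _ _).1 ht
  exact Nat.le_induction hk (fun n _ => hω n) t hkt

theorem ae_enorm_rewardBefore_le (s : S) (τ : (ℕ → S) → ℕ∞) :
    ∀ᵐ ω ∂M.traj s, ‖M.rewardBefore τ ω‖ₑ ≤ M.totalAbsReward ω := by
  filter_upwards [M.ae_mem_term_of_hitTime_le s] with ω hω
  refine enorm_tsum_le_tsum_enorm.trans (ENNReal.tsum_le_tsum fun t => ?_)
  by_cases ht : (t : ℕ∞) < hitTime M.term ω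
  · rw [if_pos ht, ← Real.enorm_eq_ofReal_abs]
    split_ifs <;> simp
  · simp [ht, M.r_term _ (hω t (not_lt.1 ht))]

theorem measurable_rewardBefore {τ : (ℕ → S) → ℕ∞} (hτ : IsStopping S τ) :
    Measurable (M.rewardBefore τ) :=
  .tsum fun t => .ite (hτ.measurableSet_lt t) (M.r_meas.comp (measurable_pi_apply t))
    measurable_const

theorem integrable_rewardBefore (s : S) {τ : (ℕ → S) → ℕ∞} (hτ : IsStopping S τ) :
    Integrable (M.rewardBefore τ) (M.traj s) :=
  ⟨(M.measurable_rewardBefore hτ).aestronglyMeasurable,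
    (lintegral_mono_ae (M.ae_enorm_rewardBefore_le s τ)).trans_lt (M.rwd_int s)⟩

theorem integral_rewardBefore_le (s : S) (τ : (ℕ → S) → ℕ∞) :
    ∫ ω, M.rewardBefore τ ω ∂M.traj s ≤ (∫⁻ ω, M.totalAbsReward ω ∂M.traj s).toReal := calc
  _ ≤ ‖∫ ω, M.rewardBefore τ ω ∂M.traj s‖ := Real.le_norm_self _
  _ = ‖∫ ω, M.rewardBefore τ ω ∂M.traj s‖ₑ.toReal := (toReal_enorm _).symm
  _ ≤ _ := ENNReal.toReal_mono (M.rwd_int s).ne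
    ((enorm_integral_le_lintegral_enorm _).trans
      (lintegral_mono_ae (M.ae_enorm_rewardBefore_le s τ)))

theorem integral_payoff (s : S) {τ : (ℕ → S) → ℕ∞} (hτ : IsStopping S τ) (α : ℝ) :
    ∫ ω, M.payoff α τ ω ∂M.traj s
      = ∫ ω, M.rewardBefore τ ω ∂M.traj s + α * (M.traj s).real {ω | τ ω < ⊤} := by
  have := M.traj_prob s
  have hpayoff : ∀ ω, M.payoff α τ ω = M.rewardBefore τ ω + α * {ω | τ ω < ⊤}.indicator 1 ω :=
    fun ω => by simp [payoff, rewardBefore, indicator]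
  have hind : Integrable ({ω | τ ω < ⊤}.indicator (1 : (ℕ → S) → ℝ)) (M.traj s) :=
    (integrable_const 1).indicator hτ.measurableSet_lt_top
  simp_rw [hpayoff]
  rw [integral_add (M.integrable_rewardBefore s hτ) (hind.const_mul α),
    integral_const_mul, integral_indicator_one hτ.measurableSet_lt_top]

theorem val_eq_iSup (s : S) :
    M.val s = fun α => ⨆ τ : {τ // IsStopping S τ},
      ∫ ω, M.rewardBefore τ.1 ω ∂M.traj s + α * (M.traj s).real {ω | τ.1 ω < ⊤} :=
  funext fun α => iSup_congr fun τ => M.integral_payoff s τ.2 α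

end MC

theorem stmt9 {S : Type*} [MeasurableSpace S] (M : MC S) (s : S) :
    ConvexOn ℝ Set.univ (M.val s) ∧ Monotone (M.val s) ∧
    (∀ α β : ℝ, α ≤ β → 0 ≤ M.val s β - M.val s α ∧ M.val s β - M.val s α ≤ β - α) ∧
    (∀ α : ℝ, ∃ d ∈ Set.Icc (0 : ℝ) 1, HasDerivWithinAt (M.val s) d (Set.Ici α) α) ∧
    (∀ α : ℝ, ∃ d ∈ Set.Icc (0 : ℝ) 1, HasDerivWithinAt (M.val s) d (Set.Iic α) α) ∧
    (∀ α : ℝ, α ≤ M.val s α) := by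
  have := M.traj_prob s
  have : Nonempty {τ // MC.IsStopping S τ} := ⟨⟨_, MC.isStopping_zero⟩⟩
  have hb : ∀ τ : {τ // MC.IsStopping S τ}, (M.traj s).real {ω | τ.1 ω < ⊤} ∈ Icc (0 : ℝ) 1 :=
    fun τ => ⟨measureReal_nonneg, measureReal_le_one⟩
  have hbdd := bddAbove_range_affine (fun τ => M.integral_rewardBefore_le s τ.1) hb
  have hmono := monotone_iSup_affine (fun τ => (hb τ).1) hbdd
  have hlip := monotone_sub_iSup_affine (fun τ => (hb τ).2) hbdd
  have hconv := convexOn_iSup_affine hbdd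
  rw [M.val_eq_iSup s]
  refine ⟨hconv, hmono, fun α β hαβ => ⟨sub_nonneg.2 (hmono hαβ), by linarith [hlip hαβ]⟩,
    hconv.exists_hasDerivWithinAt_Ici_mem_Icc hmono hlip,
    hconv.exists_hasDerivWithinAt_Iic_mem_Icc hmono hlip, fun α => ?_⟩
  simpa [MC.rewardBefore] using le_ciSup (hbdd α) ⟨_, MC.isStopping_zero⟩
end
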